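/- Let R be a commutative ring, M a module over R[x], N an R[x]-submodule of M, f ∈ R[x], and a ∈ M. Suppose f(x)^r • a = 0 and (x - 1)^n • a ∈ N for some r, n ≥ 1. Then f(1)^{rn} • a ∈ N. -/
import Mathlib


open Polynomial

theorem stmt_2 {R : Type*} [CommRing R] {M : Type*} [AddCommGroup M]
    [Module (Polynomial R) M] (N : Submodule (Polynomial R) M)
    (f : Polynomial R) (a : M) (r n : ℕ) (hr : 1 ≤ r) (hn : 1 ≤ n)
    (h1 : f ^ r • a = 0) (h2 : ((X : Polynomial R) - 1) ^ n • a ∈ N) :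
    (C (f.eval 1)) ^ (r * n) • a ∈ N := by
  set p := f.eval 1 with hp
  obtain ⟨g, hg⟩ : (X - 1 : Polynomial R) ∣ (C p ^ r - f ^ r) := by
    have : (X - C (1 : R)) ∣ (C p ^ r - f ^ r) :=
      dvd_iff_isRoot.mpr (by simp [IsRoot, hp])
    simpa using this
  have key : ∀ k, k ≤ n → (C p) ^ (r * k) • ((X - 1 : Polynomial R) ^ (n - k) • a) ∈ N := by
    intro k
    induction k with
    | zero => intro _; simpa using h2
    | succ k ih =>
      intro hk
      have hN := ih (Nat.le_of_succ_le hk)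
      have hpow : ((X - 1 : Polynomial R)) ^ (n - k)
          = (X - 1 : Polynomial R) ^ (n - (k + 1)) * (X - 1) := by
        rw [← pow_succ]
        congr 1
        omega
      have hCp : (C p) ^ r = f ^ r + (X - 1) * g := by linear_combination hg
      have heq : (C p) ^ (r * (k + 1)) • ((X - 1 : Polynomial R) ^ (n - (k + 1)) • a)
          = g • ((C p) ^ (r * k) • ((X - 1 : Polynomial R) ^ (n - k) • a))
            + ((C p) ^ (r * k) * (X - 1) ^ (n - (k + 1))) • (f ^ r • a) := by
        simp only [smul_smul]
        rw [← add_smul]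
        congr 1
        rw [hpow, Nat.mul_succ, pow_add, hCp]
        ring
      rw [heq, h1, smul_zero, add_zero]
      exact N.smul_mem g hN
  have := key n le_rfl
  simpa using this
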